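/- Fourth difference operator formula (Proposition 4.3): for every Schwartz function κ : ℝ⁴ → ℂ, every Schwartz function h : ℝ → ℂ, every μ ∈ ℝ, every λ ∈ ℝ \ {0}, and u ∈ ℝ, the function λ ↦ (π_{λ,μ}(κ)h)(u) is differentiable on ℝ \ {0}, and (π_{λ,μ}(x₄κ)h)(u) = i ∂_λ(π_{λ,μ}(κ)h)(u) − (μ/(2λ²) + u²/2)(π_{λ,μ}(x₂κ)h)(u) + u(π_{λ,μ}(x₃κ)h)(u) − (π_{λ,μ}(x₁x₃κ)h)(u) + u(π_{λ,μ}(x₁x₂κ)h)(u) − ½(π_{λ,μ}(x₁²x₂κ)h)(u). -/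

import Mathlib

open MeasureTheory Complex

noncomputable section

/-- The group Fourier transform on the Engel group:
`(π_{λ,μ}(κ)h)(u) = ∫_{ℝ⁴} κ(x) exp(i((μ/(2λ))x₂ − λx₄ + λx₃(u−x₁) − (λ/2)x₂(u−x₁)²)) h(u−x₁) dx`. -/
def piF (lam mu : ℝ) (κ : ℝ × ℝ × ℝ × ℝ → ℂ) (h : ℝ → ℂ) (u : ℝ) : ℂ :=
  ∫ x : ℝ × ℝ × ℝ × ℝ,
    κ x * Complex.exp (Complex.I *
      (((mu / (2 * lam)) * x.2.1 - lam * x.2.2.2 + lam * x.2.2.1 * (u - x.1)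
        - (lam / 2) * x.2.1 * (u - x.1) ^ 2 : ℝ) : ℂ)) * h (u - x.1)


/-!
The phase of `piF` is `μ x₂ / (2λ) + λ s(x)` with `s(x) = x₃ (u - x₁) - x₄ - x₂ (u - x₁)² / 2`.
Differentiating under the integral sign, which is legitimate near `λ ≠ 0` because the derivative
of the integrand is dominated by `(|x₂| |κ| · 2|μ|/λ² + |s κ|) ‖h‖_∞`, gives
`i ∂_λ π_{λ,μ}(κ) = (μ / (2λ²)) π_{λ,μ}(x₂ κ) - π_{λ,μ}(s κ)`. Expanding the polynomial `s` into
monomials and using linearity of `κ ↦ π_{λ,μ}(κ)h(u)` on integrable `κ` gives the formula.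
-/

open scoped BoundedContinuousFunction

-- Mathlib provides these instances only for `ℝ` and `ℝ × ℝ`.
instance : (volume : Measure (ℝ × ℝ × ℝ)).IsAddHaarMeasure := by
  rw [Measure.volume_eq_prod]; infer_instance

instance : (volume : Measure (ℝ × ℝ × ℝ × ℝ)).IsAddHaarMeasure := by
  rw [Measure.volume_eq_prod]; infer_instance

section TemperateGrowth

variable {E F : Type*} [NormedAddCommGroup E] [NormedSpace ℝ E] [NormedAddCommGroup F]
  [NormedSpace ℝ F]

@[fun_prop]
lemma Function.hasTemperateGrowth_fst : (fun p : E × F => p.1).HasTemperateGrowth :=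
  (ContinuousLinearMap.fst ℝ E F).hasTemperateGrowth

@[fun_prop]
lemma Function.hasTemperateGrowth_snd : (fun p : E × F => p.2).HasTemperateGrowth :=
  (ContinuousLinearMap.snd ℝ E F).hasTemperateGrowth

lemma SchwartzMap.integrable_hasTemperateGrowth_mul [MeasurableSpace E] [BorelSpace E]
    [SecondCountableTopology E] {μ : Measure E} [μ.HasTemperateGrowth] (κ : SchwartzMap E ℂ)
    {g : E → ℂ} (hg : g.HasTemperateGrowth) : Integrable (fun x => g x * κ x) μ := by
  simpa only [SchwartzMap.smulLeftCLM_apply hg, smul_eq_mul] using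
    (SchwartzMap.smulLeftCLM ℂ g κ).integrable (μ := μ)

end TemperateGrowth

def engelPhase (lam mu u : ℝ) (x : ℝ × ℝ × ℝ × ℝ) : ℝ :=
  (mu / (2 * lam)) * x.2.1 - lam * x.2.2.2 + lam * x.2.2.1 * (u - x.1)
    - (lam / 2) * x.2.1 * (u - x.1) ^ 2

def engelSlope (u : ℝ) (x : ℝ × ℝ × ℝ × ℝ) : ℝ :=
  x.2.2.1 * (u - x.1) - x.2.2.2 - x.2.1 * (u - x.1) ^ 2 / 2

lemma hasTemperateGrowth_engelSlope (u : ℝ) :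
    (fun x => (engelSlope u x : ℂ)).HasTemperateGrowth := by
  simp only [engelSlope, div_eq_mul_inv]
  fun_prop

lemma engelPhase_eq (lam mu u : ℝ) (x : ℝ × ℝ × ℝ × ℝ) :
    engelPhase lam mu u x = mu * x.2.1 / 2 * lam⁻¹ + lam * engelSlope u x := by
  simp only [engelPhase, engelSlope]
  ring

lemma hasDerivAt_engelPhase (mu u : ℝ) {lam : ℝ} (hlam : lam ≠ 0) (x : ℝ × ℝ × ℝ × ℝ) :
    HasDerivAt (fun l => engelPhase l mu u x)
      (engelSlope u x - mu * x.2.1 / (2 * lam ^ 2)) lam := by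
  simp only [engelPhase_eq]
  refine (((hasDerivAt_inv hlam).const_mul (mu * x.2.1 / 2)).add
    (hasDerivAt_mul_const (engelSlope u x))).congr_deriv ?_
  field_simp
  ring

def piIntegrand (lam mu : ℝ) (κ : ℝ × ℝ × ℝ × ℝ → ℂ) (h : ℝ → ℂ) (u : ℝ)
    (x : ℝ × ℝ × ℝ × ℝ) : ℂ :=
  κ x * cexp (I * engelPhase lam mu u x) * h (u - x.1)

lemma piF_eq_integral (lam mu : ℝ) (κ : ℝ × ℝ × ℝ × ℝ → ℂ) (h : ℝ → ℂ) (u : ℝ) :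
    piF lam mu κ h u = ∫ x, piIntegrand lam mu κ h u x :=
  rfl

lemma piF_const_mul (lam mu : ℝ) (c : ℂ) (κ : ℝ × ℝ × ℝ × ℝ → ℂ) (h : ℝ → ℂ) (u : ℝ) :
    piF lam mu (fun x => c * κ x) h u = c * piF lam mu κ h u := by
  simp only [piF_eq_integral, piIntegrand, mul_assoc, integral_const_mul]

lemma hasDerivAt_piIntegrand (mu : ℝ) (κ : ℝ × ℝ × ℝ × ℝ → ℂ) (h : ℝ → ℂ) (u : ℝ) {lam : ℝ}
    (hlam : lam ≠ 0) (x : ℝ × ℝ × ℝ × ℝ) :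
    HasDerivAt (fun l => piIntegrand l mu κ h u x)
      (I * piIntegrand lam mu (fun x => (engelSlope u x : ℂ) * κ x) h u x
        - I * ((mu / (2 * lam ^ 2) : ℝ) : ℂ) *
            piIntegrand lam mu (fun x => (x.2.1 : ℂ) * κ x) h u x)
      lam := by
  refine ((((hasDerivAt_engelPhase mu u hlam x).ofReal_comp.const_mul I).cexp.const_mul
    (κ x)).mul_const (h (u - x.1))).congr_deriv ?_
  simp only [piIntegrand]
  push_cast
  ring

lemma abs_div_two_mul_sq_le {lam l : ℝ} (hlam : lam ≠ 0) (hl : |lam| / 2 ≤ |l|) (mu : ℝ) :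
    |mu / (2 * l ^ 2)| ≤ 2 * |mu| / lam ^ 2 := by
  have hsq : lam ^ 2 / 4 ≤ l ^ 2 := by
    nlinarith [sq_abs lam, sq_abs l, pow_le_pow_left₀ (by positivity) hl 2]
  have hlam2 : 0 < lam ^ 2 := by positivity
  rw [abs_div, abs_mul, abs_two, abs_pow, sq_abs]
  calc |mu| / (2 * l ^ 2) ≤ |mu| / (2 * (lam ^ 2 / 4)) := by gcongr
    _ = 2 * |mu| / lam ^ 2 := by field_simp; ring

lemma half_abs_le_abs_of_mem_ball {lam l : ℝ} (hl : l ∈ Metric.ball lam (|lam| / 2)) :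
    |lam| / 2 ≤ |l| := by
  rw [Metric.mem_ball, Real.dist_eq, abs_sub_comm] at hl
  linarith [abs_sub_abs_le_abs_sub lam l]

section

variable (h : ℝ →ᵇ ℂ) {κ κ₁ κ₂ : ℝ × ℝ × ℝ × ℝ → ℂ} (lam mu u : ℝ)

lemma norm_piIntegrand_le (x : ℝ × ℝ × ℝ × ℝ) : ‖piIntegrand lam mu κ h u x‖ ≤ ‖κ x‖ * ‖h‖ := by
  rw [piIntegrand, norm_mul, norm_mul, mul_comm I, norm_exp_ofReal_mul_I, mul_one]
  exact mul_le_mul_of_nonneg_left (h.norm_coe_le_norm _) (norm_nonneg _)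

lemma integrable_piIntegrand (hκ : Integrable κ) : Integrable (piIntegrand lam mu κ h u) := by
  refine (hκ.norm.mul_const ‖h‖).mono' ?_ (ae_of_all _ (norm_piIntegrand_le h lam mu u))
  have hφ : Continuous fun x => engelPhase lam mu u x := by unfold engelPhase; fun_prop
  exact (hκ.aestronglyMeasurable.mul (by fun_prop)).mul (by fun_prop)

lemma piF_add (hκ₁ : Integrable κ₁) (hκ₂ : Integrable κ₂) :
    piF lam mu (fun x => κ₁ x + κ₂ x) h u = piF lam mu κ₁ h u + piF lam mu κ₂ h u := by
  simp only [piF_eq_integral, piIntegrand, add_mul]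
  exact integral_add (integrable_piIntegrand h lam mu u hκ₁)
    (integrable_piIntegrand h lam mu u hκ₂)

lemma piF_sub (hκ₁ : Integrable κ₁) (hκ₂ : Integrable κ₂) :
    piF lam mu (fun x => κ₁ x - κ₂ x) h u = piF lam mu κ₁ h u - piF lam mu κ₂ h u := by
  simp only [piF_eq_integral, piIntegrand, sub_mul]
  exact integral_sub (integrable_piIntegrand h lam mu u hκ₁)
    (integrable_piIntegrand h lam mu u hκ₂)

theorem hasDerivAt_piF (hκ : Integrable κ) (hκ₂ : Integrable fun x => (x.2.1 : ℂ) * κ x)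
    (hκs : Integrable fun x => (engelSlope u x : ℂ) * κ x) (hlam : lam ≠ 0) :
    HasDerivAt (fun l => piF l mu κ h u)
      (I * piF lam mu (fun x => (engelSlope u x : ℂ) * κ x) h u
        - I * ((mu / (2 * lam ^ 2) : ℝ) : ℂ) * piF lam mu (fun x => (x.2.1 : ℂ) * κ x) h u)
      lam := by
  have hr : 0 < |lam| / 2 := half_pos (abs_pos.mpr hlam)
  have hbound : ∀ x, ∀ l ∈ Metric.ball lam (|lam| / 2),
      ‖I * piIntegrand l mu (fun x => (engelSlope u x : ℂ) * κ x) h u x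
        - I * ((mu / (2 * l ^ 2) : ℝ) : ℂ) * piIntegrand l mu (fun x => (x.2.1 : ℂ) * κ x) h u x‖
      ≤ ‖(engelSlope u x : ℂ) * κ x‖ * ‖h‖ + 2 * |mu| / lam ^ 2 * (‖(x.2.1 : ℂ) * κ x‖ * ‖h‖) := by
    intro x l hl
    refine (norm_sub_le _ _).trans (add_le_add ?_ ?_)
    · rw [norm_mul, norm_I, one_mul]
      exact norm_piIntegrand_le h l mu u x
    · rw [norm_mul, norm_mul, norm_I, one_mul, norm_real, Real.norm_eq_abs]
      exact mul_le_mul (abs_div_two_mul_sq_le hlam (half_abs_le_abs_of_mem_ball hl) mu)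
        (norm_piIntegrand_le h l mu u x) (norm_nonneg _) (by positivity)
  obtain ⟨-, hD⟩ := hasDerivAt_integral_of_dominated_loc_of_deriv_le
    (Metric.ball_mem_nhds lam hr)
    (Filter.Eventually.of_forall fun l => (integrable_piIntegrand h l mu u hκ).aestronglyMeasurable)
    (integrable_piIntegrand h lam mu u hκ)
    (((integrable_piIntegrand h lam mu u hκs).const_mul I).sub
      ((integrable_piIntegrand h lam mu u hκ₂).const_mul _)).aestronglyMeasurable
    (ae_of_all _ hbound)
    ((hκs.norm.mul_const _).add ((hκ₂.norm.mul_const _).const_mul _))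
    (ae_of_all _ fun x l hl => hasDerivAt_piIntegrand mu κ h u
      (abs_pos.mp (hr.trans_le (half_abs_le_abs_of_mem_ball hl))) x)
  rwa [integral_sub ((integrable_piIntegrand h lam mu u hκs).const_mul I)
    ((integrable_piIntegrand h lam mu u hκ₂).const_mul _), integral_const_mul,
    integral_const_mul] at hD

lemma piF_engelSlope_mul (h4 : Integrable fun x => (x.2.2.2 : ℂ) * κ x)
    (h3 : Integrable fun x => (x.2.2.1 : ℂ) * κ x)
    (h13 : Integrable fun x => (x.1 : ℂ) * (x.2.2.1 : ℂ) * κ x)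
    (h2 : Integrable fun x => (x.2.1 : ℂ) * κ x)
    (h12 : Integrable fun x => (x.1 : ℂ) * (x.2.1 : ℂ) * κ x)
    (h112 : Integrable fun x => (x.1 : ℂ) ^ 2 * (x.2.1 : ℂ) * κ x) :
    piF lam mu (fun x => (engelSlope u x : ℂ) * κ x) h u =
      u * piF lam mu (fun x => (x.2.2.1 : ℂ) * κ x) h u
        - piF lam mu (fun x => (x.1 : ℂ) * (x.2.2.1 : ℂ) * κ x) h u
        - piF lam mu (fun x => (x.2.2.2 : ℂ) * κ x) h u
        - (u ^ 2 / 2 : ℂ) * piF lam mu (fun x => (x.2.1 : ℂ) * κ x) h u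
        + u * piF lam mu (fun x => (x.1 : ℂ) * (x.2.1 : ℂ) * κ x) h u
        - (1 / 2 : ℂ) * piF lam mu (fun x => (x.1 : ℂ) ^ 2 * (x.2.1 : ℂ) * κ x) h u := by
  have hexpand : (fun x => (engelSlope u x : ℂ) * κ x) = fun x =>
      u * ((x.2.2.1 : ℂ) * κ x) - (x.1 : ℂ) * (x.2.2.1 : ℂ) * κ x - (x.2.2.2 : ℂ) * κ x
        - (u ^ 2 / 2 : ℂ) * ((x.2.1 : ℂ) * κ x) + u * ((x.1 : ℂ) * (x.2.1 : ℂ) * κ x)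
        - (1 / 2 : ℂ) * ((x.1 : ℂ) ^ 2 * (x.2.1 : ℂ) * κ x) := by
    funext x
    simp only [engelSlope]
    push_cast
    ring
  rw [hexpand]
  simp (disch := fun_prop) only [piF_add, piF_sub, piF_const_mul]

end

/-- Fourth difference operator formula (Proposition 4.3): for Schwartz `κ` and `h`, every
`μ`, every `λ ≠ 0` and `u`, the map `λ ↦ (π_{λ,μ}(κ)h)(u)` is differentiable on `ℝ\{0}`,
and `(π_{λ,μ}(x₄κ)h)(u) = i∂_λ(π_{λ,μ}(κ)h)(u) − (μ/(2λ²)+u²/2)(π_{λ,μ}(x₂κ)h)(u)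
+ u(π_{λ,μ}(x₃κ)h)(u) − (π_{λ,μ}(x₁x₃κ)h)(u) + u(π_{λ,μ}(x₁x₂κ)h)(u)
− ½(π_{λ,μ}(x₁²x₂κ)h)(u)`. -/
theorem engel_difference_operator_x4 :
    ∀ κ : SchwartzMap (ℝ × ℝ × ℝ × ℝ) ℂ, ∀ h : SchwartzMap ℝ ℂ,
      ∀ mu : ℝ, ∀ lam : ℝ, lam ≠ 0 → ∀ u : ℝ,
        DifferentiableAt ℝ (fun l : ℝ => piF l mu κ h u) lam ∧
        piF lam mu (fun x => (x.2.2.2 : ℂ) * κ x) h u =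
          Complex.I * deriv (fun l : ℝ => piF l mu κ h u) lam
            - ((mu / (2 * lam ^ 2) + u ^ 2 / 2 : ℝ) : ℂ) *
                piF lam mu (fun x => (x.2.1 : ℂ) * κ x) h u
            + (u : ℂ) * piF lam mu (fun x => (x.2.2.1 : ℂ) * κ x) h u
            - piF lam mu (fun x => (x.1 : ℂ) * (x.2.2.1 : ℂ) * κ x) h u
            + (u : ℂ) * piF lam mu (fun x => (x.1 : ℂ) * (x.2.1 : ℂ) * κ x) h u
            - (1 / 2 : ℂ) * piF lam mu (fun x => (x.1 : ℂ) ^ 2 * (x.2.1 : ℂ) * κ x) h u := by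
  intro κ h mu lam hlam u
  obtain ⟨hb, hcoe⟩ : ∃ hb : ℝ →ᵇ ℂ, ⇑hb = ⇑h := ⟨_, funext h.toBoundedContinuousFunction_apply⟩
  rw [← hcoe]
  have hκ : ∀ g : ℝ × ℝ × ℝ × ℝ → ℂ, g.HasTemperateGrowth → Integrable fun x => g x * κ x :=
    fun _ => κ.integrable_hasTemperateGrowth_mul
  have hD := hasDerivAt_piF hb lam mu u κ.integrable (hκ _ (by fun_prop))
    (hκ _ (hasTemperateGrowth_engelSlope u)) hlam
  refine ⟨hD.differentiableAt, ?_⟩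
  rw [hD.deriv, piF_engelSlope_mul hb lam mu u (hκ _ (by fun_prop)) (hκ _ (by fun_prop))
    (hκ _ (by fun_prop)) (hκ _ (by fun_prop)) (hκ _ (by fun_prop)) (hκ _ (by fun_prop))]
  simp only [mul_sub, ← mul_assoc, I_mul_I]
  push_cast
  ring
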